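/- For every integer n ≥ 0, ∑_{t∈ℱ_{n+1}} ∫₀¹ φ^x_v(t) dv = n^n/(n+1)! (with 0⁰ = 1), where the sum is over rooted plane trees with n+1 nodes and φ^x is the iterated integral functional associated with the kernels a^x(u,v) = 1_{[0,u]}(v) and a^y(u,v) = 1_{[u,1]}(v). -/

import Mathlib

open scoped Classical

/-- Rooted plane trees: a tree is a root together with the ordered list of
the subtrees hanging from its children (left-to-right order). -/
inductive PTree where
  | node : List PTree → PTree

namespace PTree

instance : Inhabited PTree := ⟨.node []⟩

/-- number of nodes -/
def size : PTree → ℕ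
  | node l => 1 + (l.attach.map (fun c => size c.1)).sum
decreasing_by
  have := List.sizeOf_lt_of_mem c.2
  simp only [node.sizeOf_spec]; omega

/-- tree factorial: `t! = |t| * ∏ᵢ tᵢ!` -/
def tfact : PTree → ℕ
  | node l => size (node l) * (l.attach.map (fun c => tfact c.1)).prod
decreasing_by
  have := List.sizeOf_lt_of_mem c.2
  simp only [node.sizeOf_spec]; omega

/-- Shape equivalence: two plane trees have the same underlying rooted tree,
i.e. there is a bijection between children matching shape-equivalent subtrees. -/
inductive ShapeEq : PTree → PTree → Prop
  | node {l₁ l₂ : List PTree} (e : Fin l₁.length ≃ Fin l₂.length)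
      (h : ∀ i, ShapeEq (l₁.get i) (l₂.get (e i))) :
      ShapeEq (node l₁) (node l₂)

lemma size_pos (t : PTree) : 0 < t.size := by
  cases t; simp [size]

/-- The plane tree encoded by a parent function `p : Fin n → Fin n`:
`shapeAux n p fuel i` is the subtree rooted at node `i`, whose children are the
`j` with `p j = i` and `i < j` (ordered by label). `fuel = n` suffices. -/
def shapeAux (n : ℕ) (p : Fin n → Fin n) : ℕ → Fin n → PTree
  | 0, _ => node []
  | fuel+1, i =>
      node (((List.finRange n).filter (fun j => decide (p j = i ∧ i < j))).map
        (shapeAux n p fuel))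

/-- The plane tree encoded by a parent function (rooted at node `0`). -/
def shapeOf {n : ℕ} (p : Fin n → Fin n) : PTree :=
  if h : 0 < n then shapeAux n p n ⟨0, h⟩ else node []

/-- `alpha t` is the number of rooted labelled (increasing) trees of shape `t`:
labelled trees are encoded by their parent function, the root carrying the
label `0` and labels increasing away from the root. -/
noncomputable def alpha (t : PTree) : ℕ :=
  Nat.card {p : Fin t.size → Fin t.size //
    p ⟨0, t.size_pos⟩ = ⟨0, t.size_pos⟩ ∧
    (∀ j : Fin t.size, 0 < (j : ℕ) → (p j : ℕ) < j) ∧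
    ShapeEq (shapeOf p) t}

/-- `kappa t` is the number of rooted plane trees of shape `t`. -/
noncomputable def kappa (t : PTree) : ℕ := Nat.card {t' : PTree // ShapeEq t' t}

/-- symmetry factor: `σ(B₊(t₁^{n₁},…,t_m^{n_m})) = ∏ᵢ nᵢ! σ(tᵢ)^{nᵢ}`. -/
noncomputable def sym : PTree → ℕ
  | node l =>
      (∏ j : Fin l.length,
        (l.take ((j : ℕ) + 1)).countP (fun c => decide (ShapeEq c (l.get j)))) *
      (l.attach.map (fun c => sym c.1)).prod
decreasing_by
  have := List.sizeOf_lt_of_mem c.2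
  simp only [node.sizeOf_spec]; omega

/-- elementary differentials: `δ_• = 1`, `δ_t = k! ψ_k ∏ᵢ δ_{tᵢ}`. -/
def delta (ψ : ℕ → ℝ) : PTree → ℝ
  | node l =>
      (Nat.factorial l.length : ℝ) * ψ l.length *
      (l.attach.map (fun c => delta ψ c.1)).prod
decreasing_by
  have := List.sizeOf_lt_of_mem c.2
  simp only [node.sizeOf_spec]; omega

/-- bare Green function with weights `B`: `B(t) = B_{|t|} ∏ᵢ B(tᵢ)`. -/
def bare (B : ℕ → ℝ) : PTree → ℝ
  | node l => B (size (node l)) * (l.attach.map (fun c => bare B c.1)).prod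
decreasing_by
  have := List.sizeOf_lt_of_mem c.2
  simp only [node.sizeOf_spec]; omega

/-- `wt ψ t = ∏_{v ∈ t} ψ (d v)` where `d v` is the outdegree of `v`. -/
def wt (ψ : ℕ → ℝ) : PTree → ℝ
  | node l => ψ l.length * (l.attach.map (fun c => wt ψ c.1)).prod
decreasing_by
  have := List.sizeOf_lt_of_mem c.2
  simp only [node.sizeOf_spec]; omega

/-- `nodeProd B t = ∏_{w ≠ root} B_{|t_w|}`, product over non-root nodes of `t`. -/
def nodeProd (B : ℕ → ℝ) : PTree → ℝ
  | node l => (l.attach.map (fun c => B (size c.1) * nodeProd B c.1)).prod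
decreasing_by
  have := List.sizeOf_lt_of_mem c.2
  simp only [node.sizeOf_spec]; omega

/-- `R` is a set of representatives of the rooted trees with `n` nodes:
every plane tree of size `n` is shape-equivalent to exactly one member of `R`. -/
def IsTransversal (n : ℕ) (R : Finset PTree) : Prop :=
  (∀ t ∈ R, size t = n) ∧
  ∀ t : PTree, size t = n → ∃! u, u ∈ R ∧ ShapeEq t u

end PTree

namespace PTree

/-- The iterated integrals `φ^x` (flag `true`) and `φ^y` (flag `false`)
associated with the kernels `a^x(u,v) = 1_{[0,u]}(v)`, `a^y(u,v) = 1_{[u,1]}(v)`: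
`φ^x_u(•) = φ^y_u(•) = 1` and, for `t = B₊(t₁,…,t_k)`,
`φ^x_u(t) = ∏ᵢ ∫₀ᵘ φ^y_v(tᵢ) dv` and `φ^y_u(t) = ∏ᵢ ∫ᵤ¹ φ^x_v(tᵢ) dv`. -/
noncomputable def phiT : Bool → ℝ → PTree → ℝ
  | true, u, node l =>
      (l.attach.map (fun c => ∫ v in (0:ℝ)..u, phiT false v c.1)).prod
  | false, u, node l =>
      (l.attach.map (fun c => ∫ v in u..(1:ℝ), phiT true v c.1)).prod
decreasing_by
  all_goals
  · have := List.sizeOf_lt_of_mem c.2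
    simp only [node.sizeOf_spec]; omega

end PTree

/-!
Reflecting `v ↦ 1 - v` exchanges the two kernels, so `φ^y_u = φ^x_{1-u}` and only `φ^x` is
needed. Summed over all trees `B₊(l)` whose forest `l` has `n` nodes, `φ^x_u` equals the normalized
Abel polynomial `a_n(u) = u (u + n)^(n-1) / n!`. Indeed, splitting off the first tree of the forest
turns the sum into a convolution in which the first tree contributes
`∫₀ᵘ a_i(1 - v) dv = -a_{i+1}(-u)`, and Abel's identity `∑_{i+j=n} a_i(x) a_j(y) = a_n(x + y)`
at `x = -u`, `y = u` closes the induction. Finally `∫₀¹ a_n = -a_{n+1}(-1) = nⁿ/(n+1)!`.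
-/

open Finset
open scoped Nat

noncomputable def abelPoly : ℕ → ℝ → ℝ
  | 0, _ => 1
  | n + 1, x => x * (x + (n + 1)) ^ n / (n + 1)!

@[simp] lemma abelPoly_zero (x : ℝ) : abelPoly 0 x = 1 := rfl

lemma abelPoly_succ (n : ℕ) (x : ℝ) :
    abelPoly (n + 1) x = x * (x + (n + 1)) ^ n / (n + 1)! := rfl

@[simp] lemma abelPoly_succ_zero (n : ℕ) : abelPoly (n + 1) 0 = 0 := by simp [abelPoly_succ]

lemma hasDerivAt_abelPoly_succ (n : ℕ) (x : ℝ) :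
    HasDerivAt (abelPoly (n + 1)) (abelPoly n (x + 1)) x := by
  have h := ((hasDerivAt_id' x).mul
    (((hasDerivAt_id' x).add_const ((n : ℝ) + 1)).pow n)).div_const ((n + 1)! : ℝ)
  refine h.congr_deriv ?_
  cases n with
  | zero => simp
  | succ m =>
    rw [abelPoly_succ, Nat.factorial_succ (m + 1)]
    simp only [Pi.pow_apply, add_tsub_cancel_right]
    push_cast
    field_simp
    ring

lemma sum_antidiagonal_abelPoly (n : ℕ) (x y : ℝ) :
    ∑ p ∈ antidiagonal n, abelPoly p.1 x * abelPoly p.2 y = abelPoly n (x + y) := by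
  induction n generalizing x with
  | zero => simp
  | succ n ih =>
    have hderiv : ∀ x, HasDerivAt (fun x => ∑ p ∈ antidiagonal (n + 1),
        abelPoly p.1 x * abelPoly p.2 y - abelPoly (n + 1) (x + y)) 0 x := by
      intro x
      simp_rw [Nat.sum_antidiagonal_succ, abelPoly_zero]
      have hsum := HasDerivAt.fun_sum (u := antidiagonal n) fun p _ =>
        (hasDerivAt_abelPoly_succ p.1 x).mul_const (abelPoly p.2 y)
      have hrhs := (hasDerivAt_abelPoly_succ n (x + y)).comp_add_const x y
      refine (((hasDerivAt_const x _).add hsum).sub hrhs).congr_deriv ?_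
      rw [ih, zero_add, sub_eq_zero, add_right_comm]
    have hconst := is_const_of_deriv_eq_zero (fun x => (hderiv x).differentiableAt)
      (fun x => (hderiv x).deriv) x 0
    simpa [Nat.sum_antidiagonal_succ, sub_eq_zero] using hconst

lemma sum_antidiagonal_abelPoly_succ_neg (n : ℕ) (u : ℝ) :
    ∑ p ∈ antidiagonal n, abelPoly (p.1 + 1) (-u) * abelPoly p.2 u = -abelPoly (n + 1) u := by
  have h := sum_antidiagonal_abelPoly (n + 1) (-u) u
  rw [Nat.sum_antidiagonal_succ, neg_add_cancel, abelPoly_succ_zero, abelPoly_zero, one_mul] at h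
  linarith

lemma continuous_abelPoly (n : ℕ) : Continuous (abelPoly n) := by
  cases n with
  | zero => exact continuous_const
  | succ n =>
    exact continuous_iff_continuousAt.2 fun x => (hasDerivAt_abelPoly_succ n x).continuousAt

lemma integral_abelPoly (n : ℕ) (a b : ℝ) :
    ∫ x in a..b, abelPoly n x = abelPoly (n + 1) (b - 1) - abelPoly (n + 1) (a - 1) := by
  refine intervalIntegral.integral_eq_sub_of_hasDerivAt (f := fun x => abelPoly (n + 1) (x - 1))
    (fun x _ => ?_) ((continuous_abelPoly n).intervalIntegrable a b)
  simpa using (hasDerivAt_abelPoly_succ n (x - 1)).comp_sub_const x 1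

lemma integral_abelPoly_one_sub (n : ℕ) (u : ℝ) :
    ∫ v in (0 : ℝ)..u, abelPoly n (1 - v) = -abelPoly (n + 1) (-u) := by
  rw [intervalIntegral.integral_comp_sub_left (abelPoly n), integral_abelPoly]
  simp

namespace PTree

lemma node_injective : Function.Injective node := fun _ _ h => by injection h

lemma size_node (l : List PTree) : size (node l) = 1 + (l.map size).sum := by
  rw [size, List.attach_map_val]

noncomputable def forests : ℕ → Finset (List PTree)
  | 0 => {[]}
  | n + 1 => (antidiagonal n).attach.biUnion fun p =>
      (forests p.1.1 ×ˢ forests p.1.2).image fun q => node q.1 :: q.2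
decreasing_by
  all_goals have := HasAntidiagonal.mem_antidiagonal.1 p.2; omega

lemma mem_forests (n : ℕ) (l : List PTree) : l ∈ forests n ↔ (l.map size).sum = n := by
  induction n using Nat.strong_induction_on generalizing l with
  | _ n ih =>
    match n, l with
    | 0, [] => simp [forests]
    | 0, t :: l => simp [forests, (size_pos t).ne']
    | n + 1, [] => simp [forests]
    | n + 1, node f :: l =>
      simp only [forests, mem_biUnion, mem_attach, true_and, mem_image, mem_product,
        List.cons.injEq, node_injective.eq_iff, Subtype.exists, HasAntidiagonal.mem_antidiagonal,
        Prod.exists, exists_prop, exists_eq_right_right, exists_eq_right, List.map_cons,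
        List.sum_cons, size_node]
      constructor
      · rintro ⟨i, j, hij, hf, hl⟩
        rw [(ih i (by omega) f).1 hf, (ih j (by omega) l).1 hl]
        omega
      · intro h
        exact ⟨_, _, by omega, (ih _ (by omega) f).2 rfl, (ih _ (by omega) l).2 rfl⟩

lemma sum_forests_succ {R : Type*} [CommSemiring R] (w : PTree → R) (n : ℕ) :
    ∑ l ∈ forests (n + 1), (l.map w).prod =
      ∑ p ∈ antidiagonal n,
        (∑ f ∈ forests p.1, w (node f)) * ∑ l ∈ forests p.2, (l.map w).prod := by
  have hinj : Function.Injective fun q : List PTree × List PTree => node q.1 :: q.2 :=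
    fun q q' h => by
      simp only [List.cons.injEq, node_injective.eq_iff] at h
      exact Prod.ext h.1 h.2
  rw [forests, sum_biUnion, ← sum_attach (antidiagonal n)]
  · refine sum_congr rfl fun p _ => ?_
    rw [sum_image fun q _ q' _ h => hinj h, sum_product, sum_mul_sum]
    simp
  · intro p _ q _ hpq
    simp only [Function.onFun, disjoint_left, mem_image, mem_product, not_exists, not_and]
    rintro _ ⟨⟨f, l⟩, ⟨hf, hl⟩, rfl⟩ ⟨f', l'⟩ ⟨hf', hl'⟩ h
    simp only [List.cons.injEq, node_injective.eq_iff] at h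
    obtain ⟨rfl, rfl⟩ := h
    rw [mem_forests] at hf hl hf' hl'
    exact hpq (Subtype.ext (Prod.ext (hf.symm.trans hf') (hl.symm.trans hl')))

lemma phiT_true_node (u : ℝ) (l : List PTree) :
    phiT true u (node l) = (l.map fun c => ∫ v in (0 : ℝ)..u, phiT false v c).prod := by
  rw [phiT, List.attach_map_val (f := fun c => ∫ v in (0 : ℝ)..u, phiT false v c)]

lemma phiT_false_node (u : ℝ) (l : List PTree) :
    phiT false u (node l) = (l.map fun c => ∫ v in u..(1 : ℝ), phiT true v c).prod := by
  rw [phiT, List.attach_map_val (f := fun c => ∫ v in u..(1 : ℝ), phiT true v c)]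

theorem phiT_false_eq : ∀ (t : PTree) (u : ℝ), phiT false u t = phiT true (1 - u) t
  | node l, u => by
    rw [phiT_false_node, phiT_true_node]
    refine congrArg List.prod (List.map_congr_left fun c hc => ?_)
    simp_rw [phiT_false_eq c]
    rw [intervalIntegral.integral_comp_sub_left (fun v => phiT true v c), sub_sub_cancel, sub_zero]

lemma phiT_true_node' (u : ℝ) (l : List PTree) :
    phiT true u (node l) = (l.map fun c => ∫ v in (0 : ℝ)..u, phiT true (1 - v) c).prod := by
  simp_rw [phiT_true_node, phiT_false_eq]

theorem continuous_phiT_true : ∀ t : PTree, Continuous fun u => phiT true u t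
  | node l => by
    simp_rw [phiT_true_node']
    refine continuous_list_prod l fun c hc =>
      intervalIntegral.continuous_primitive (fun a b => ?_) 0
    exact ((continuous_phiT_true c).comp (continuous_sub_left 1)).intervalIntegrable a b

theorem sum_forests_phiT_true_node (n : ℕ) (u : ℝ) :
    ∑ l ∈ forests n, phiT true u (node l) = abelPoly n u := by
  induction n using Nat.strong_induction_on generalizing u with
  | _ n ih =>
    cases n with
    | zero => simp [forests, phiT_true_node]
    | succ n =>
      have htrees (m : ℕ) (hm : m < n + 1) :
          ∑ f ∈ forests m, ∫ v in (0 : ℝ)..u, phiT true (1 - v) (node f) =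
            -abelPoly (m + 1) (-u) :=
        calc _ = ∫ v in (0 : ℝ)..u, ∑ f ∈ forests m, phiT true (1 - v) (node f) :=
              (intervalIntegral.integral_finsetSum fun f _ =>
                ((continuous_phiT_true (node f)).comp (continuous_sub_left 1)).intervalIntegrable
                  0 u).symm
          _ = ∫ v in (0 : ℝ)..u, abelPoly m (1 - v) := by simp_rw [ih m hm]
          _ = -abelPoly (m + 1) (-u) := integral_abelPoly_one_sub m u
      calc ∑ l ∈ forests (n + 1), phiT true u (node l)
          = ∑ p ∈ antidiagonal n,
              (∑ f ∈ forests p.1, ∫ v in (0 : ℝ)..u, phiT true (1 - v) (node f)) *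
                ∑ l ∈ forests p.2, phiT true u (node l) := by
            simp_rw [phiT_true_node' u]
            exact sum_forests_succ _ n
        _ = ∑ p ∈ antidiagonal n, -(abelPoly (p.1 + 1) (-u) * abelPoly p.2 u) :=
          sum_congr rfl fun p hp => by
            have hp := HasAntidiagonal.mem_antidiagonal.1 hp
            rw [htrees p.1 (by omega), ih p.2 (by omega), neg_mul]
        _ = abelPoly (n + 1) u := by
          rw [sum_neg_distrib, sum_antidiagonal_abelPoly_succ_neg, neg_neg]

lemma mem_image_node_forests (n : ℕ) (t : PTree) :
    t ∈ (forests n).image node ↔ size t = n + 1 := by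
  obtain ⟨l⟩ := t
  simp only [mem_image, node_injective.eq_iff, exists_eq_right, mem_forests, size_node]
  omega

end PTree

open PTree in
/-- For every `n ≥ 0`, `∑_{t∈ℱ_{n+1}} ∫₀¹ φ^x_v(t) dv = nⁿ/(n+1)!`
(with `0⁰ = 1`): these are the moments `τ((TT*)ⁿ)` of the Dykema–Haagerup
triangular operator. -/
theorem sum_phi_eq_moment (n : ℕ)
    (F : Finset PTree) (hF : ∀ t : PTree, t ∈ F ↔ size t = n + 1) :
    ∑ t ∈ F, (∫ v in (0:ℝ)..1, phiT true v t) =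
      (n : ℝ) ^ n / (Nat.factorial (n + 1) : ℝ) := by
  have hF' : F = (forests n).image node := by
    ext t
    rw [hF, mem_image_node_forests]
  rw [hF', sum_image fun _ _ _ _ h => node_injective h, ← intervalIntegral.integral_finsetSum
    fun l _ => (continuous_phiT_true _).intervalIntegrable 0 1]
  simp_rw [sum_forests_phiT_true_node]
  rw [integral_abelPoly, sub_self, zero_sub, abelPoly_succ_zero, abelPoly_succ,
    Nat.factorial_succ]
  push_cast
  field_simp
  ring
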